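/- For the matrix Riccati equation A'(t) = (1/η)·A(t)·M·A(t) - (γ/2)·Σ with terminal condition A(T) = diag(K,0), where M = (1,k)ᵀ(1,k) and Σ positive semidefinite, any solution satisfies A(t) ⪯ A(T) + (γ/2)·Σ·(T-t) in the Loewner order, for t ∈ [0,T]; hence solutions remain bounded and exist globally on [0,T]. -/

import Mathlib

open Real Set Matrix

/-!
Along a solution, `A(t) + (γ/2)·t·Σ` has derivative `(1/η)·A M A = (1/η)·(A v)(A v)ᵀ` with
`v = (1, k)`, which is positive semidefinite. Hence `t ↦ A(t) + (γ/2)·t·Σ` is increasing in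
the Loewner order, and comparing its values at `t` and `T` gives the bound.
-/

namespace Matrix

variable {n : Type*} [Fintype n]

theorem hasDerivAt_dotProduct_mulVec {F : ℝ → Matrix n n ℝ} {F' : Matrix n n ℝ} {t : ℝ}
    (hF : ∀ i j, HasDerivAt (fun s => F s i j) (F' i j) t) (x : n → ℝ) :
    HasDerivAt (fun s => x ⬝ᵥ F s *ᵥ x) (x ⬝ᵥ F' *ᵥ x) t := by
  simp only [dotProduct, mulVec]
  exact HasDerivAt.fun_sum fun i _ =>
    (HasDerivAt.fun_sum fun j _ => (hF i j).mul_const (x j)).const_mul (x i)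

theorem posSemidef_sub_of_hasDerivAt_posSemidef {F F' : ℝ → Matrix n n ℝ} {a b : ℝ}
    (hab : a ≤ b)
    (hF : ∀ s ∈ Icc a b, ∀ i j, HasDerivAt (fun u => F u i j) (F' s i j) s)
    (hF' : ∀ s ∈ Icc a b, (F' s).PosSemidef) (hFab : (F b - F a).IsHermitian) :
    (F b - F a).PosSemidef := by
  refine .of_dotProduct_mulVec_nonneg hFab fun x => ?_
  have hmono : MonotoneOn (fun s => x ⬝ᵥ F s *ᵥ x) (Icc a b) := by
    have hderiv s (hs : s ∈ Icc a b) := hasDerivAt_dotProduct_mulVec (hF s hs) x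
    refine monotoneOn_of_hasDerivWithinAt_nonneg (convex_Icc a b)
      (fun s hs => (hderiv s hs).continuousAt.continuousWithinAt)
      (fun s hs => (hderiv s (interior_subset hs)).hasDerivWithinAt)
      (fun s hs => (hF' s (interior_subset hs)).dotProduct_mulVec_nonneg x)
  have := hmono ⟨le_rfl, hab⟩ ⟨hab, le_rfl⟩ hab
  simpa [sub_mulVec, dotProduct_sub] using this

theorem posSemidef_mul_vecMulVec_mul {A : Matrix n n ℝ}
    (hA : A.IsSymm) (v : n → ℝ) : (A * vecMulVec v v * A).PosSemidef := by
  have := (posSemidef_vecMulVec_self_star v).mul_mul_conjTranspose_same A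
  rwa [star_trivial, conjTranspose_eq_transpose_of_trivial, hA.eq] at this

end Matrix

theorem stmt_8_general (T η γ k σ ν ρ : ℝ) (hη : 0 < η)
    (M Sig : Matrix (Fin 2) (Fin 2) ℝ)
    (hM : M = !![1, k; k, k ^ 2])
    (hSig : Sig = !![σ ^ 2, ρ * σ * ν; ρ * σ * ν, ν ^ 2])
    (A : ℝ → Matrix (Fin 2) (Fin 2) ℝ)
    (hAsymm : ∀ t ∈ Icc 0 T, (A t).IsSymm)
    (hA : ∀ t ∈ Icc 0 T, ∀ i j, HasDerivAt (fun s => A s i j)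
      (((1 / η) • (A t * M * A t) - (γ / 2) • Sig) i j) t) :
    ∀ t ∈ Icc 0 T, (A T + ((γ / 2) * (T - t)) • Sig - A t).PosSemidef := by
  intro t ht
  have hsub : Icc t T ⊆ Icc 0 T := Icc_subset_Icc_left ht.1
  have hM' : M = vecMulVec ![1, k] ![1, k] := by
    rw [hM]; ext i j; fin_cases i <;> fin_cases j <;> simp [vecMulVec, sq]
  have hSigSymm : Sig.IsHermitian := by
    rw [hSig]; ext i j; fin_cases i <;> fin_cases j <;> simp
  let F := fun u => A u + (γ / 2 * u) • Sig
  have hFdiff : F T - F t = A T + ((γ / 2) * (T - t)) • Sig - A t := by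
    simp only [F, mul_sub, sub_smul]; abel
  rw [← hFdiff]
  refine posSemidef_sub_of_hasDerivAt_posSemidef ht.2 (F' := fun s => (1 / η) • (A s * M * A s))
    (fun s hs i j => ?_) (fun s hs => ?_) ?_
  · refine ((hA s (hsub hs) i j).add
      (((hasDerivAt_id s).const_mul (γ / 2)).mul_const (Sig i j))).congr_deriv ?_
    simp
  · rw [hM']
    exact (posSemidef_mul_vecMulVec_mul (hAsymm s (hsub hs)) _).smul (by positivity)
  · rw [hFdiff]
    have hAherm s (hs : s ∈ Icc 0 T) := isHermitian_iff_isSymm.mpr (hAsymm s hs)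
    exact ((hAherm T ⟨ht.1.trans ht.2, le_rfl⟩).add (hSigSymm.smul (.all _))).sub (hAherm t ht)

/-- Loewner comparison for the matrix Riccati equation of Model B: any C¹ solution with
`A(t) ⪰ 0` on `[0,T]` satisfies `A(t) ⪯ A(T) + (γ/2)(T-t)·Σ`; hence solutions remain
bounded and exist globally on `[0,T]`. -/
theorem stmt_8 (T η γ k K σ ν ρ : ℝ) (hT : 0 < T) (hη : 0 < η) (hγ : 0 ≤ γ)
    (hk : 0 ≤ k) (hK : 0 ≤ K) (hσ : 0 < σ) (hν : 0 ≤ ν) (hρ : ρ ∈ Icc (-1 : ℝ) 1)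
    (M Sig : Matrix (Fin 2) (Fin 2) ℝ)
    (hM : M = !![1, k; k, k ^ 2])
    (hSig : Sig = !![σ ^ 2, ρ * σ * ν; ρ * σ * ν, ν ^ 2])
    (A : ℝ → Matrix (Fin 2) (Fin 2) ℝ)
    (hAsymm : ∀ t ∈ Icc 0 T, (A t).IsSymm)
    (hApsd : ∀ t ∈ Icc 0 T, (A t).PosSemidef)
    (hA : ∀ t ∈ Icc 0 T, ∀ i j, HasDerivAt (fun s => A s i j)
      (((1 / η) • (A t * M * A t) - (γ / 2) • Sig) i j) t)
    (hAT : A T = !![K, 0; 0, 0]) :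
    ∀ t ∈ Icc 0 T, (A T + ((γ / 2) * (T - t)) • Sig - A t).PosSemidef :=
  stmt_8_general T η γ k σ ν ρ hη M Sig hM hSig A hAsymm hA
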